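/- arXiv:1607.03981 — 3 statements merged into one kernel-verified Lean document; each statement's English description precedes it below -/
import Mathlib

section
/- Let X be a connected normal bi-Cayley graph over a finite group H, and let Y be a connected normal Cayley graph over a finite group K. If X and Y are relatively prime with respect to the Cartesian product (i.e., Aut(X □ Y) = Aut(X) × Aut(Y) acting coordinatewise), then X □ Y is a normal bi-Cayley graph over the group H × K. -/
/-- The coordinatewise automorphism of a box product built from automorphisms of the factors. -/
def boxAut {α β : Type*} {X : SimpleGraph α} {Y : SimpleGraph β}
    (a : X ≃g X) (b : Y ≃g Y) : X.boxProd Y ≃g X.boxProd Y where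
  toEquiv := Equiv.prodCongr a.toEquiv b.toEquiv
  map_rel_iff' := by
    intro p q
    simp only [SimpleGraph.boxProd_adj, Equiv.prodCongr_apply, Prod.map_fst, Prod.map_snd,
      EmbeddingLike.apply_eq_iff_eq]
    exact or_congr (and_congr_left' a.map_adj_iff) (and_congr_left' b.map_adj_iff)

@[simp] lemma boxAut_apply {α β : Type*} {X : SimpleGraph α} {Y : SimpleGraph β}
    (a : X ≃g X) (b : Y ≃g Y) (p : α × β) : boxAut a b p = (a p.1, b p.2) := rfl

/-- Let `X` be a connected normal bi-Cayley graph over a finite group `H`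
(i.e. `H` embeds in `Aut(X)` as a semiregular subgroup with two orbits which is normal),
and let `Y` be a connected normal Cayley graph over a finite group `K` (i.e. `K` embeds
in `Aut(Y)` as a regular normal subgroup).  If `X` and `Y` are relatively prime w.r.t.
the Cartesian product — formalized by the assumption that every automorphism of `X □ Y`
acts coordinatewise, so that `Aut(X □ Y) = Aut(X) × Aut(Y)` — then `X □ Y` is a normal
bi-Cayley graph over the group `H × K`. -/
theorem boxProd_normal_biCayley
    {α β : Type*} [Fintype α] [Fintype β]
    (X : SimpleGraph α) (Y : SimpleGraph β)
    (H K : Type*) [Group H] [Fintype H] [Group K] [Fintype K]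
    (hXconn : X.Connected) (hYconn : Y.Connected)
    -- X is a normal bi-Cayley graph over H:
    (φ : H →* (X ≃g X))
    (hφsemireg : ∀ (g : H) (v : α), φ g v = v → g = 1)
    (hφorb : ∃ u w : α, (¬ ∃ g : H, φ g u = w) ∧
      ∀ v : α, (∃ g : H, φ g u = v) ∨ (∃ g : H, φ g w = v))
    (hφnormal : φ.range.Normal)
    -- Y is a normal Cayley graph over K:
    (ψ : K →* (Y ≃g Y))
    (hψsemireg : ∀ (k : K) (v : β), ψ k v = v → k = 1)
    (hψtrans : ∀ u v : β, ∃ k : K, ψ k u = v)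
    (hψnormal : ψ.range.Normal)
    -- X and Y are relatively prime: Aut(X □ Y) = Aut(X) × Aut(Y):
    (hcoprime : ∀ Φ : X.boxProd Y ≃g X.boxProd Y,
      ∃ (a : X ≃g X) (b : Y ≃g Y), ∀ p : α × β, Φ p = (a p.1, b p.2)) :
    ∃ χ : H × K →* (X.boxProd Y ≃g X.boxProd Y),
      (∀ (g : H × K) (p : α × β), χ g p = (φ g.1 p.1, ψ g.2 p.2)) ∧
      (∀ (g : H × K) (p : α × β), χ g p = p → g = 1) ∧
      (∃ u w : α × β, (¬ ∃ g : H × K, χ g u = w) ∧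
        ∀ v : α × β, (∃ g : H × K, χ g u = v) ∨ (∃ g : H × K, χ g w = v)) ∧
      χ.range.Normal := by
  refine ⟨MonoidHom.mk' (fun g => boxAut (φ g.1) (ψ g.2)) ?_, ?_, ?_, ?_, ?_⟩
  · intro g₁ g₂
    apply RelIso.ext
    intro p
    simp [RelIso.mul_apply]
  · intro g p; rfl
  · intro g p hp
    have h1 : φ g.1 p.1 = p.1 := congrArg Prod.fst hp
    have h2 : ψ g.2 p.2 = p.2 := congrArg Prod.snd hp
    exact Prod.ext (hφsemireg _ _ h1) (hψsemireg _ _ h2)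
  · obtain ⟨u₀, w₀, hnw, horb⟩ := hφorb
    have hβ : Nonempty β := hYconn.nonempty
    obtain ⟨b₀⟩ := hβ
    refine ⟨(u₀, b₀), (w₀, b₀), ?_, ?_⟩
    · rintro ⟨g, hg⟩
      exact hnw ⟨g.1, congrArg Prod.fst hg⟩
    · intro v
      obtain ⟨k, hk⟩ := hψtrans b₀ v.2
      rcases horb v.1 with ⟨g, hg⟩ | ⟨g, hg⟩
      · exact Or.inl ⟨(g, k), Prod.ext hg hk⟩
      · exact Or.inr ⟨(g, k), Prod.ext hg hk⟩
  · constructor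
    rintro n ⟨g, rfl⟩ Φ
    obtain ⟨a, b, hab⟩ := hcoprime Φ
    have hinv : ∀ p : α × β, Φ⁻¹ p = (a⁻¹ p.1, b⁻¹ p.2) := by
      intro p
      have : Φ (a⁻¹ p.1, b⁻¹ p.2) = p := by
        rw [hab]
        exact Prod.ext (a.apply_symm_apply p.1) (b.apply_symm_apply p.2)
      calc Φ⁻¹ p = Φ⁻¹ (Φ (a⁻¹ p.1, b⁻¹ p.2)) := by rw [this]
        _ = (a⁻¹ p.1, b⁻¹ p.2) := Φ.symm_apply_apply _
    obtain ⟨g', hg'⟩ := hφnormal.conj_mem (φ g.1) ⟨g.1, rfl⟩ a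
    obtain ⟨k', hk'⟩ := hψnormal.conj_mem (ψ g.2) ⟨g.2, rfl⟩ b
    refine ⟨(g', k'), ?_⟩
    apply RelIso.ext
    intro p
    show (φ g' p.1, ψ k' p.2) = Φ (boxAut (φ g.1) (ψ g.2) (Φ⁻¹ p))
    rw [hg', hk', hinv, boxAut_apply, hab]
    rfl
end

section
/- For every n ≥ 1, the n-dimensional hypercube Q_n = Cay(C₂ⁿ, S) (S a basis of C₂ⁿ) is a normal Cayley graph, i.e., the right regular representation R(C₂ⁿ) is a normal subgroup of Aut(Q_n). -/
/-- The Cayley graph of an additive group `G` with respect to a connection set `S`. -/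
def addCayley (G : Type*) [AddGroup G] (S : Set G) : SimpleGraph G :=
  SimpleGraph.fromRel (fun g h => h - g ∈ S)

/-!
An automorphism `σ` of the hypercube sends each edge `{x, x + bᵢ}` to an edge `{σ x, σ x + bₚ}`.
Comparing the two ways around the image of a square `x, x + bᵢ, x + bₖ, x + bᵢ + bₖ` and using
the linear independence of the basis shows that opposite edges of a square keep the same
direction. Hence `x ↦ σ (x + bᵢ) - σ x` is invariant under every `bₖ`, so it is constant, and since
the `bᵢ` generate the group, `σ (x + v) - σ x` is independent of `x` for every `v`. Thus `σ`
conjugates the translation by `v` into a translation.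
-/

open Function Set

variable {ι V W : Type*}

section Subgroups

variable [AddGroup V]

def periodSubgroup (f : V → W) : AddSubgroup V where
  carrier := {c | Periodic f c}
  add_mem' := Periodic.add_period
  zero_mem' := fun x => by rw [add_zero]
  neg_mem' := Periodic.neg

lemma mem_periodSubgroup {f : V → W} {c : V} : c ∈ periodSubgroup f ↔ Periodic f c := Iff.rfl

variable [AddGroup W]

def affineDirections (f : V → W) : AddSubgroup V where
  carrier := {v | ∃ w, ∀ x, f (x + v) = f x + w}
  add_mem' := by
    rintro u v ⟨wu, hu⟩ ⟨wv, hv⟩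
    exact ⟨wu + wv, fun x => by rw [← add_assoc, hv, hu, add_assoc]⟩
  zero_mem' := ⟨0, fun x => by rw [add_zero, add_zero]⟩
  neg_mem' := by
    rintro v ⟨w, hw⟩
    refine ⟨-w, fun x => eq_add_neg_of_add_eq ?_⟩
    rw [← hw, neg_add_cancel_right]

end Subgroups

lemma mem_affineDirections_of_forall_periodic [AddGroup V] [AddCommGroup W] {f : V → W} {v : V}
    (h : ∀ c, Periodic (fun x => f (x + v) - f x) c) : v ∈ affineDirections f :=
  ⟨f v - f 0, fun x => by
    have := h x 0
    simp only [zero_add] at this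
    rw [← this, add_sub_cancel]⟩

lemma AddSubgroup.eq_top_of_range_basis_subset {n : ℕ} [AddCommGroup V] [Module (ZMod n) V]
    (b : Module.Basis ι (ZMod n) V) {H : AddSubgroup V} (h : range b ⊆ H) : H = ⊤ := by
  have : toZModSubmodule n H = ⊤ := eq_top_iff.2 (b.span_eq ▸ Submodule.span_le.2 h)
  simpa using congrArg Submodule.toAddSubgroup this

lemma Module.Basis.eq_of_add_eq_add {R M : Type*} [Semiring R] [Nontrivial R] [AddCommMonoid M]
    [Module R M] (b : Module.Basis ι R M) {p q r s : ι} (h : b p + b q = b r + b s)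
    (hpq : p ≠ q) (hpr : p ≠ r) : p = s := by
  by_contra hps
  have := congrArg (fun v => b.repr v p) h
  simp [hpq.symm, hpr.symm, Ne.symm hps] at this

namespace addCayley

def addRight [AddGroup V] (S : Set V) (v : V) : addCayley V S ≃g addCayley V S where
  toEquiv := Equiv.addRight v
  map_rel_iff' := by simp [addCayley, SimpleGraph.fromRel_adj, add_sub_add_right_eq_sub]

section Translations

variable [AddCommGroup V] (S : Set V)

def translations : Multiplicative V →* (addCayley V S ≃g addCayley V S) where
  toFun v := addRight S v.toAdd
  map_one' := RelIso.ext fun x => add_zero x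
  map_mul' u v := RelIso.ext fun x => by
    change x + (u.toAdd + v.toAdd) = x + v.toAdd + u.toAdd
    rw [add_comm u.toAdd, add_assoc]

lemma translations_apply (v x : V) : translations S (Multiplicative.ofAdd v) x = x + v := rfl

lemma translations_range_normal
    (h : ∀ σ : addCayley V S ≃g addCayley V S, affineDirections σ = ⊤) :
    (translations S).range.Normal where
  conj_mem := by
    rintro _ ⟨v, rfl⟩ σ
    obtain ⟨w, hw⟩ := (h σ).symm ▸ AddSubgroup.mem_top v.toAdd
    refine ⟨Multiplicative.ofAdd w, RelIso.ext fun x => ?_⟩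
    change x + w = σ (σ.symm x + v.toAdd)
    rw [hw, σ.apply_symm_apply]

end Translations

section Hypercube

variable [AddCommGroup V] [Module (ZMod 2) V] (b : Module.Basis ι (ZMod 2) V)

lemma adj_range_basis_iff {x y : V} : (addCayley V (range b)).Adj x y ↔ ∃ i, y = x + b i := by
  rw [addCayley, SimpleGraph.fromRel_adj, ZModModule.sub_eq_add, ZModModule.sub_eq_add,
    add_comm x y, or_self]
  constructor
  · rintro ⟨-, i, hi⟩
    exact ⟨i, by rw [hi, add_left_comm, ZModModule.add_self, add_zero]⟩
  · rintro ⟨i, rfl⟩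
    exact ⟨left_ne_add.2 (b.ne_zero i), i, by
      rw [add_right_comm, ZModModule.add_self, zero_add]⟩

variable {b}

lemma exists_map_add_basis (σ : addCayley V (range b) ≃g addCayley V (range b)) (x : V) (i : ι) :
    ∃ p, σ (x + b i) = σ x + b p :=
  (adj_range_basis_iff b).1 (σ.map_adj_iff.2 ((adj_range_basis_iff b).2 ⟨i, rfl⟩))

lemma periodic_map_add_basis_sub (σ : addCayley V (range b) ≃g addCayley V (range b)) (i k : ι) :
    Periodic (fun x => σ (x + b i) - σ x) (b k) := by
  intro x
  dsimp only
  by_cases hik : i = k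
  · subst hik
    rw [add_assoc, ZModModule.add_self, add_zero, ZModModule.sub_eq_add, ZModModule.sub_eq_add,
      add_comm]
  obtain ⟨p, hp⟩ := exists_map_add_basis σ x i
  obtain ⟨r, hr⟩ := exists_map_add_basis σ x k
  obtain ⟨q, hq⟩ := exists_map_add_basis σ (x + b i) k
  obtain ⟨s, hs⟩ := exists_map_add_basis σ (x + b k) i
  have hrel : b p + b q = b r + b s := add_left_cancel (a := σ x) <| by
    rw [← add_assoc, ← add_assoc, ← hp, ← hr, ← hq, ← hs, add_right_comm]
  have hpq : p ≠ q := by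
    rintro rfl
    rw [hp, add_assoc (σ x), ZModModule.add_self, add_zero, σ.injective.eq_iff, add_assoc,
      add_eq_left, add_eq_zero_iff_eq_neg, ZModModule.neg_eq_self] at hq
    exact hik (b.injective hq)
  have hpr : p ≠ r := by
    rintro rfl
    exact hik (b.injective (add_left_cancel (σ.injective (hp.trans hr.symm))))
  rw [hs, hp, add_sub_cancel_left, add_sub_cancel_left, b.eq_of_add_eq_add hrel hpq hpr]

lemma affineDirections_eq_top (σ : addCayley V (range b) ≃g addCayley V (range b)) :
    affineDirections σ = ⊤ :=
  AddSubgroup.eq_top_of_range_basis_subset b <| by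
    rintro _ ⟨i, rfl⟩
    refine mem_affineDirections_of_forall_periodic fun c => ?_
    have : periodSubgroup (fun x => σ (x + b i) - σ x) = ⊤ :=
      AddSubgroup.eq_top_of_range_basis_subset b <| by
        rintro _ ⟨k, rfl⟩
        exact periodic_map_add_basis_sub σ i k
    exact mem_periodSubgroup.1 (this ▸ AddSubgroup.mem_top c)

end Hypercube

end addCayley

theorem hypercube_normal_cayley_general (n : ℕ)
    (b : Module.Basis (Fin n) (ZMod 2) (Fin n → ZMod 2)) (S : Set (Fin n → ZMod 2))
    (hS : S = Set.range b) :
    ∃ τ : Multiplicative (Fin n → ZMod 2) →*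
        (addCayley (Fin n → ZMod 2) S ≃g addCayley (Fin n → ZMod 2) S),
      (∀ (v x : Fin n → ZMod 2), τ (Multiplicative.ofAdd v) x = x + v) ∧
      τ.range.Normal := by
  subst hS
  exact ⟨addCayley.translations _, addCayley.translations_apply _,
    addCayley.translations_range_normal _ addCayley.affineDirections_eq_top⟩

/-- For every `n ≥ 1`, the hypercube `Q_n = Cay(C₂ⁿ, S)`, where `S` is a
basis of the elementary abelian group `C₂ⁿ = (ZMod 2)ⁿ`, is a normal Cayley graph: the
right regular representation `R(C₂ⁿ)` (acting by translations) is a normal subgroup of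
`Aut(Q_n)`. -/
theorem hypercube_normal_cayley (n : ℕ) (hn : 1 ≤ n)
    (b : Module.Basis (Fin n) (ZMod 2) (Fin n → ZMod 2)) (S : Set (Fin n → ZMod 2))
    (hS : S = Set.range b) :
    ∃ τ : Multiplicative (Fin n → ZMod 2) →*
        (addCayley (Fin n → ZMod 2) S ≃g addCayley (Fin n → ZMod 2) S),
      (∀ (v x : Fin n → ZMod 2), τ (Multiplicative.ofAdd v) x = x + v) ∧
      τ.range.Normal :=
  hypercube_normal_cayley_general n b S hS
end

section
/- Let G = G₁ × G₂ be a generalized dicyclic group with witness subgroup L of index 2 and element b of order 4, where G₂ ≅ C₂^r and G₂ ≤ L. Write b = g₁g₂ with g₁ ∈ G₁, g₂ ∈ G₂. Then g₁ has order 4, g₁⁻¹ a g₁ = a⁻¹ for all a ∈ G₁ ∩ L, and [G₁ : G₁ ∩ L] = 2; hence if G₁ is non-abelian then G₁ is itself a generalized dicyclic group. -/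
/-- A group `G` is generalized dicyclic if it is non-abelian and has an abelian subgroup
`L` of index `2` and an element `b ∈ G \ L` of order `4` with `b⁻¹ x b = x⁻¹` for all
`x ∈ L`. -/
def IsGeneralizedDicyclic (G : Type*) [Group G] : Prop :=
  (¬ ∀ x y : G, x * y = y * x) ∧
  ∃ (L : Subgroup G) (b : G), L.index = 2 ∧ (∀ x ∈ L, ∀ y ∈ L, x * y = y * x) ∧
    b ∉ L ∧ orderOf b = 4 ∧ ∀ x ∈ L, b⁻¹ * x * b = x⁻¹

/-- Let `G = G₁ × G₂` be a generalized dicyclic group with witness `L` of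
index `2` and element `b = (g₁, g₂)` of order `4`, where `G₂` is an elementary abelian
`2`-group contained in `L`.  Then `g₁` has order `4`, `g₁⁻¹ a g₁ = a⁻¹` for all
`a ∈ G₁ ∩ L`, and `[G₁ : G₁ ∩ L] = 2`; hence if `G₁` is non-abelian then `G₁` is itself a
generalized dicyclic group. -/
theorem generalized_dicyclic_direct_factor (G₁ G₂ : Type*) [Group G₁] [Group G₂]
    (L : Subgroup (G₁ × G₂)) (hL2 : L.index = 2)
    (hLab : ∀ x ∈ L, ∀ y ∈ L, x * y = y * x)
    (b : G₁ × G₂) (hb : b ∉ L) (hb4 : orderOf b = 4)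
    (hinv : ∀ x ∈ L, b⁻¹ * x * b = x⁻¹)
    (hG2elem : ∀ x : G₂, x * x = 1)
    (hG2L : ∀ x : G₂, ((1 : G₁), x) ∈ L) :
    orderOf b.1 = 4 ∧
    (∀ a : G₁, (a, (1 : G₂)) ∈ L → b.1⁻¹ * a * b.1 = a⁻¹) ∧
    (L.comap (MonoidHom.inl G₁ G₂)).index = 2 ∧
    ((¬ ∀ x y : G₁, x * y = y * x) → IsGeneralizedDicyclic G₁) := by

  -- order of second coordinate divides 2
  have ho2 : orderOf b.2 ∣ 2 := orderOf_dvd_of_pow_eq_one (by rw [pow_two]; exact hG2elem b.2)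
  have ho1 : orderOf b.1 = 4 := by
    have hlcm : Nat.lcm (orderOf b.1) (orderOf b.2) = 4 := by
      rw [← Prod.orderOf]; exact hb4
    have h1d : orderOf b.1 ∣ 4 := hlcm ▸ Nat.dvd_lcm_left _ _
    by_contra hne
    have h1d2 : orderOf b.1 ∣ 2 := by
      have hle : orderOf b.1 ≤ 4 := Nat.le_of_dvd (by norm_num) h1d
      interval_cases h : orderOf b.1 <;> revert h1d hne <;> decide
    have : Nat.lcm (orderOf b.1) (orderOf b.2) ∣ 2 := Nat.lcm_dvd h1d2 ho2
    rw [hlcm] at this; omega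
  -- membership in L only depends on the first coordinate
  have memL : ∀ (a : G₁) (x : G₂), (a, x) ∈ L ↔ (a, (1:G₂)) ∈ L := by
    intro a x
    constructor
    · intro h
      have := L.mul_mem h (hG2L x)
      simpa [Prod.mk_mul_mk, hG2elem x] using this
    · intro h
      have := L.mul_mem h (hG2L x)
      simpa [Prod.mk_mul_mk] using this
  -- conjugation
  have hconj : ∀ a : G₁, (a, (1 : G₂)) ∈ L → b.1⁻¹ * a * b.1 = a⁻¹ := by
    intro a ha
    have h := hinv (a, 1) ha
    have := congrArg Prod.fst h
    simpa using this
  set A : Subgroup G₁ := L.comap (MonoidHom.inl G₁ G₂) with hA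
  have hmemA : ∀ g : G₁, g ∈ A ↔ (g, (1:G₂)) ∈ L := fun g => Iff.rfl
  have hb1A : b.1 ∉ A := by
    intro h
    rw [hmemA, ← memL b.1 b.2] at h
    exact hb h
  have hAidx : A.index = 2 := by
    rw [Subgroup.index_eq_two_iff]
    refine ⟨b.1, fun g => ?_⟩
    have h1 : g * b.1 ∈ A ↔ ((g, (1:G₂)) ∈ L ↔ b ∈ L) := by
      rw [hmemA, ← memL _ b.2]
      have : ((g * b.1, b.2) : G₁ × G₂) = (g, 1) * b := by
        simp [Prod.ext_iff]
      rw [this, Subgroup.mul_mem_iff_of_index_two hL2]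
    rw [h1, hmemA]
    rcases Classical.em ((g, (1:G₂)) ∈ L) with h | h <;> simp [Xor', h, hb]
  refine ⟨ho1, hconj, hAidx, fun hna => ⟨hna, A, b.1, hAidx, ?_, hb1A, ho1, ?_⟩⟩
  · intro x hx y hy
    have := hLab (x, 1) hx (y, 1) hy
    have := congrArg Prod.fst this
    simpa using this
  · intro x hx
    exact hconj x hx
end
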